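/- arXiv:2206.04036 — 2 statements merged into one kernel-verified Lean document; each statement's English description precedes it below -/
import Mathlib

section
/- For all integers s, t ≥ 2, the set Ω_{s,t} of realizable pairs of independent-set and clique densities is a compact subset of [0,1]². -/
open Filter Topology

/-- `kcount t G` is the number of `t`-element vertex subsets of `G` inducing a clique,
i.e. the number of copies of `K_t` in `G`. -/
noncomputable def kcount {V : Type*} (t : ℕ) (G : SimpleGraph V) : ℕ :=
  Nat.card {s : Finset V // G.IsNClique t s}

/-- `OmegaST s t` is the set of pairs `(x, y)` such that some sequence of graphs `G n`
on `n` vertices has independent-`s`-set density tending to `x` and `K_t`-density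
tending to `y`. -/
def OmegaST (s t : ℕ) : Set (ℝ × ℝ) :=
  {p | ∃ G : (n : ℕ) → SimpleGraph (Fin n),
    Filter.Tendsto (fun n : ℕ => (kcount s (G n)ᶜ : ℝ) / (n.choose s : ℝ))
      Filter.atTop (nhds p.1) ∧
    Filter.Tendsto (fun n : ℕ => (kcount t (G n) : ℝ) / (n.choose t : ℝ))
      Filter.atTop (nhds p.2)}

/-! `Ω_{s,t}` is the set of limits of sequences `a n ∈ S n`, where `S n` is the set of density
pairs of graphs on `n` vertices; as every `S n` is nonempty, this is the set of points `p` with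
`infDist p (S n) → 0`. That set is closed because `infDist` is `1`-Lipschitz in the point, and it
lies in `[0,1]²` because every `S n` does. -/

open Metric Set

section LowerLimit

variable {X : Type*} [PseudoMetricSpace X]

theorem isClosed_setOf_tendsto_infDist_zero {ι : Type*} (l : Filter ι) (S : ι → Set X) :
    IsClosed {p | Tendsto (fun i => infDist p (S i)) l (𝓝 0)} := by
  refine isClosed_of_closure_subset fun p hp => Metric.tendsto_nhds.mpr fun ε hε => ?_
  obtain ⟨q, hq, hpq⟩ := Metric.mem_closure_iff.mp hp (ε / 2) (half_pos hε)
  filter_upwards [Metric.tendsto_nhds.mp hq (ε / 2) (half_pos hε)] with i hi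
  rw [Real.dist_0_eq_abs, abs_of_nonneg infDist_nonneg] at hi ⊢
  linarith [infDist_le_infDist_add_dist (x := p) (y := q) (s := S i)]

theorem exists_seq_forall_mem_tendsto_iff_tendsto_infDist {S : ℕ → Set X}
    (hS : ∀ n, (S n).Nonempty) (p : X) :
    (∃ a : ℕ → X, (∀ n, a n ∈ S n) ∧ Tendsto a atTop (𝓝 p)) ↔
      Tendsto (fun n => infDist p (S n)) atTop (𝓝 0) := by
  constructor
  · rintro ⟨a, ha, hap⟩
    have hdist : Tendsto (fun n => dist p (a n)) atTop (𝓝 0) := by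
      simpa only [dist_comm] using tendsto_iff_dist_tendsto_zero.mp hap
    exact squeeze_zero (fun n => infDist_nonneg) (fun n => infDist_le_dist_of_mem (ha n)) hdist
  · intro h
    have hnear : ∀ n : ℕ, ∃ x ∈ S n, dist p x < infDist p (S n) + 1 / ((n : ℝ) + 1) :=
      fun n => (infDist_lt_iff (hS n)).mp (lt_add_of_pos_right _ Nat.one_div_pos_of_nat)
    choose a ha hnear using hnear
    have hbound : Tendsto (fun n : ℕ => infDist p (S n) + 1 / ((n : ℝ) + 1)) atTop (𝓝 0) := by
      simpa using h.add tendsto_one_div_add_atTop_nhds_zero_nat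
    refine ⟨a, ha, tendsto_iff_dist_tendsto_zero.mpr ?_⟩
    exact squeeze_zero (fun n => dist_nonneg)
      (fun n => (dist_comm (a n) p).le.trans (hnear n).le) hbound

end LowerLimit

lemma kcount_le_choose {V : Type*} [Fintype V] (t : ℕ) (G : SimpleGraph V) :
    kcount t G ≤ (Fintype.card V).choose t := by
  classical
  calc kcount t G = (G.cliqueFinset t).card := by
        rw [kcount, Nat.card_eq_fintype_card, Fintype.card_subtype]; rfl
    _ ≤ (Fintype.card V).choose t := G.card_cliqueFinset_le

lemma natCast_div_mem_Icc {a c : ℕ} (h : a ≤ c) : (a : ℝ) / c ∈ Icc (0 : ℝ) 1 :=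
  ⟨by positivity, div_le_one_of_le₀ (by exact_mod_cast h) (Nat.cast_nonneg c)⟩

noncomputable def densityPair (s t : ℕ) {n : ℕ} (G : SimpleGraph (Fin n)) : ℝ × ℝ :=
  ((kcount s Gᶜ : ℝ) / (n.choose s : ℝ), (kcount t G : ℝ) / (n.choose t : ℝ))

lemma densityPair_mem_Icc_prod_Icc (s t : ℕ) {n : ℕ} (G : SimpleGraph (Fin n)) :
    densityPair s t G ∈ Icc (0 : ℝ) 1 ×ˢ Icc (0 : ℝ) 1 :=
  ⟨natCast_div_mem_Icc (by simpa using kcount_le_choose s Gᶜ),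
    natCast_div_mem_Icc (by simpa using kcount_le_choose t G)⟩

lemma omegaST_eq_setOf_exists_tendsto (s t : ℕ) :
    OmegaST s t = {p | ∃ G : (n : ℕ) → SimpleGraph (Fin n),
      Tendsto (fun n => densityPair s t (G n)) atTop (𝓝 p)} := by
  ext p
  exact exists_congr fun G => (Prod.tendsto_iff (fun n => densityPair s t (G n)) p).symm

lemma omegaST_eq_setOf_tendsto_infDist (s t : ℕ) :
    OmegaST s t = {p | Tendsto (fun n => infDist p (range (densityPair s t (n := n))))
      atTop (𝓝 0)} := by
  ext p
  rw [omegaST_eq_setOf_exists_tendsto, mem_ofPred_eq, mem_ofPred_eq,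
    ← exists_seq_forall_mem_tendsto_iff_tendsto_infDist fun n => range_nonempty _]
  constructor
  · rintro ⟨G, hG⟩
    exact ⟨_, fun n => mem_range_self (G n), hG⟩
  · rintro ⟨a, ha, hap⟩
    choose G hG using ha
    exact ⟨G, by simpa only [hG] using hap⟩

theorem OmegaST_compact_general (s t : ℕ) :
    IsCompact (OmegaST s t) ∧
    OmegaST s t ⊆ Set.Icc (0 : ℝ) 1 ×ˢ Set.Icc (0 : ℝ) 1 := by
  have hsub : OmegaST s t ⊆ Set.Icc (0 : ℝ) 1 ×ˢ Set.Icc (0 : ℝ) 1 := by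
    rw [omegaST_eq_setOf_exists_tendsto]
    rintro p ⟨G, hG⟩
    exact (isClosed_Icc.prod isClosed_Icc).mem_of_tendsto hG
      (Eventually.of_forall fun n => densityPair_mem_Icc_prod_Icc s t (G n))
  have hclosed : IsClosed (OmegaST s t) := by
    rw [omegaST_eq_setOf_tendsto_infDist]
    exact isClosed_setOf_tendsto_infDist_zero _ _
  exact ⟨(isCompact_Icc.prod isCompact_Icc).of_isClosed_subset hclosed hsub, hsub⟩

/-- For all `s, t ≥ 2`, the region `Ω_{s,t}` is a compact subset of `[0,1]²`. -/
theorem OmegaST_compact (s t : ℕ) (hs : 2 ≤ s) (ht : 2 ≤ t) :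
    IsCompact (OmegaST s t) ∧
    OmegaST s t ⊆ Set.Icc (0 : ℝ) 1 ×ˢ Set.Icc (0 : ℝ) 1 :=
  OmegaST_compact_general s t
end

section
/- For all integers s, t ≥ 2, the set Ω_{s,t} is vertically convex: if (x,y_1) ∈ Ω_{s,t} and (x,y_2) ∈ Ω_{s,t} and y_1 ≤ y ≤ y_2, then (x,y) ∈ Ω_{s,t}. In particular, Ω_{s,t} is the simply connected region between its lower and upper bounding curves. -/
open Filter Topology

/-!
Given graph sequences `A n` and `B n` realizing `(x, y₁)` and `(x, y₂)`, walk from `A n` to `B n`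
one edge at a time: delete an edge of `A n \ B n` while the independent-`s`-set density lies below
that of `B n`, and otherwise add an edge of `B n \ A n`. Deleting never lowers that density and
adding never raises it, and a single edge changes the density of `K_r` (in `G` or in `Gᶜ`) by at
most `r / n`, so the independent-set density stays within `s / n` of the values at the two ends,
while the `K_t`-density moves from `K_t(A n)` to `K_t(B n)` in steps of at most `t / n` and passes
within `t / n` of `y`. As `n → ∞` these graphs realize `(x, y)`.
-/

open Set OrderDual

theorem CovBy.compl {α : Type*} [BooleanAlgebra α] {a b : α} (h : a ⋖ b) : bᶜ ⋖ aᶜ :=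
  ⟨compl_lt_compl_iff_lt.2 h.lt, fun c hbc hca =>
    h.2 (by simpa using compl_lt_compl_iff_lt.2 hca) (by simpa using compl_lt_compl_iff_lt.2 hbc)⟩

section ApproxIntermediateValue

variable {α : Type*} [DistribLattice α]

/-- Each step of the walk towards `b` shrinks `[a ⊓ b, a ⊔ b]`, and in a distributive lattice
this interval determines `a`. -/
def joinMeet (b a : α) : α × αᵒᵈ := (a ⊔ b, toDual (a ⊓ b))

lemma joinMeet_lt_of_covBy_of_inf_le {a a' b : α} (h : a' ⋖ a) (hb : a ⊓ b ≤ a') :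
    joinMeet b a' < joinMeet b a := by
  have hinf : a' ⊓ b = a ⊓ b := le_antisymm (inf_le_inf_right b h.le) (le_inf hb inf_le_right)
  refine lt_of_le_of_ne ⟨sup_le_sup_right h.le b, hinf.ge⟩ fun heq => h.ne ?_
  exact eq_of_inf_eq_sup_eq hinf (congrArg Prod.fst heq)

lemma joinMeet_lt_of_covBy_of_le_sup {a a' b : α} (h : a ⋖ a') (hb : a' ≤ a ⊔ b) :
    joinMeet b a' < joinMeet b a := by
  have hsup : a' ⊔ b = a ⊔ b := le_antisymm (sup_le hb le_sup_right) (sup_le_sup_right h.le b)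
  refine lt_of_le_of_ne ⟨hsup.le, inf_le_inf_right b h.le⟩ fun heq => h.ne' ?_
  exact eq_of_inf_eq_sup_eq (congrArg (ofDual ∘ Prod.snd) heq) hsup

variable [Finite α] {f g : α → ℝ} {δ δ' lo hi : ℝ}

lemma exists_covBy_step_toward (hf : Antitone f) (hfδ : ∀ ⦃c d⦄, c ⋖ d → f c ≤ f d + δ)
    {a b : α} (hlo : lo ≤ f b - δ) (hhi : f b + δ ≤ hi) (ha : f a ∈ Icc lo hi) (hab : a ≠ b) :
    ∃ a', (a' ⋖ a ∨ a ⋖ a') ∧ joinMeet b a' < joinMeet b a ∧ f a' ∈ Icc lo hi := by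
  have down (h : ¬a ≤ b) : ∃ a', a ⊓ b ≤ a' ∧ a' ⋖ a := exists_le_covBy_of_lt (inf_lt_left.2 h)
  have up (h : ¬b ≤ a) : ∃ a', a ⋖ a' ∧ a' ≤ a ⊔ b := exists_covBy_le_of_lt (left_lt_sup.2 h)
  rcases lt_or_ge (f a) (f b) with hfab | hfab
  · by_cases hle : a ≤ b
    · obtain ⟨a', hcov, ha'⟩ := up fun h => hab (le_antisymm hle h)
      rw [sup_eq_right.2 hle] at ha'
      refine ⟨a', .inr hcov, joinMeet_lt_of_covBy_of_le_sup hcov (ha'.trans le_sup_right), ?_, ?_⟩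
      · linarith [hf ha', ha.1]
      · linarith [hf hcov.le, ha.2]
    · obtain ⟨a', ha', hcov⟩ := down hle
      refine ⟨a', .inl hcov, joinMeet_lt_of_covBy_of_inf_le hcov ha', ?_, ?_⟩
      · linarith [hf hcov.le, ha.1]
      · linarith [hfδ hcov]
  · by_cases hle : b ≤ a
    · obtain ⟨a', ha', hcov⟩ := down fun h => hab (le_antisymm h hle)
      rw [inf_eq_right.2 hle] at ha'
      refine ⟨a', .inl hcov, joinMeet_lt_of_covBy_of_inf_le hcov (inf_le_right.trans ha'), ?_, ?_⟩
      · linarith [hf hcov.le, ha.1]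
      · linarith [hf ha', ha.2]
    · obtain ⟨a', hcov, ha'⟩ := up hle
      refine ⟨a', .inr hcov, joinMeet_lt_of_covBy_of_le_sup hcov ha', ?_, ?_⟩
      · linarith [hfδ hcov]
      · linarith [hf hcov.le, ha.2]

theorem exists_approx_intermediate_value_of_mem_Icc (hf : Antitone f)
    (hfδ : ∀ ⦃c d⦄, c ⋖ d → f c ≤ f d + δ) (hgδ : ∀ ⦃c d⦄, c ⋖ d → dist (g c) (g d) ≤ δ')
    (hδ' : 0 ≤ δ') {b : α} (hlo : lo ≤ f b - δ) (hhi : f b + δ ≤ hi) (a : α)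
    (ha : f a ∈ Icc lo hi) {y : ℝ} (hy : y ∈ uIcc (g a) (g b)) :
    ∃ c, f c ∈ Icc lo hi ∧ dist (g c) y ≤ δ' := by
  induction a using (InvImage.wf (joinMeet b) wellFounded_lt).induction with
  | _ a ih =>
  by_cases hab : a = b
  · subst hab
    rw [uIcc_self, mem_singleton_iff] at hy
    exact ⟨a, ha, by rwa [hy, dist_self]⟩
  obtain ⟨a', hcov, hlt, ha'⟩ := exists_covBy_step_toward hf hfδ hlo hhi ha hab
  have hstep : dist (g a) (g a') ≤ δ' := hcov.elim (fun h => dist_comm (g a) _ ▸ hgδ h) (hgδ ·)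
  rcases uIcc_subset_uIcc_union_uIcc hy with hy' | hy'
  · exact ⟨a, ha, (Real.dist_left_le_of_mem_uIcc hy').trans hstep⟩
  · exact ih a' hlt ha' hy'

theorem exists_approx_intermediate_value (hf : Antitone f)
    (hfδ : ∀ ⦃c d⦄, c ⋖ d → f c ≤ f d + δ) (hgδ : ∀ ⦃c d⦄, c ⋖ d → dist (g c) (g d) ≤ δ')
    (hδ : 0 ≤ δ) (hδ' : 0 ≤ δ') (a b : α) {y : ℝ} (hy : y ∈ uIcc (g a) (g b)) :
    ∃ c, f c ∈ Icc (min (f a) (f b) - δ) (max (f a) (f b) + δ) ∧ dist (g c) y ≤ δ' :=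
  exists_approx_intermediate_value_of_mem_Icc hf hfδ hgδ hδ'
    (by linarith [min_le_right (f a) (f b)]) (by linarith [le_max_right (f a) (f b)]) a
    ⟨by linarith [min_le_left (f a) (f b)], by linarith [le_max_left (f a) (f b)]⟩ hy

end ApproxIntermediateValue

theorem Nat.cast_choose_pred_div_cast_choose_le (n : ℕ) {t : ℕ} (ht : t ≠ 0) :
    ((n - 1).choose (t - 1) : ℝ) / n.choose t ≤ t / n := by
  obtain ⟨k, rfl⟩ : ∃ k, t = k + 1 := ⟨t - 1, by omega⟩
  rcases n with _ | m
  · simp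
  rcases (m + 1).choose (k + 1) |>.eq_zero_or_pos with h0 | hpos
  · rw [h0, Nat.cast_zero, div_zero]
    positivity
  refine (div_eq_div_iff (by positivity) (by positivity)).2 ?_ |>.le
  norm_cast
  rw [Nat.add_sub_cancel, Nat.add_sub_cancel, mul_comm, Nat.add_one_mul_choose_eq, mul_comm]

theorem SimpleGraph.exists_eq_sup_edge_of_covBy {V : Type*} {G H : SimpleGraph V} (h : G ⋖ H) :
    ∃ u v, H = G ⊔ edge u v := by
  obtain ⟨u, v, hH, hG⟩ : ∃ u v, H.Adj u v ∧ ¬G.Adj u v := by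
    by_contra! hne
    exact h.lt.not_ge fun u v huv => hne u v huv
  refine ⟨u, v, ((h.eq_or_eq le_sup_left (sup_le h.le ?_)).resolve_left ?_).symm⟩
  · exact (edge_le_iff H).2 (.inr hH)
  · exact (lt_sup_edge G u v hH.ne hG).ne'

section CliqueCount

open Finset SimpleGraph

variable {V : Type*} [Fintype V]

theorem kcount_eq_card_cliqueFinset [DecidableEq V] (t : ℕ) (G : SimpleGraph V)
    [DecidableRel G.Adj] : kcount t G = #(G.cliqueFinset t) := by
  rw [kcount, Nat.card_eq_fintype_card, Fintype.card_subtype]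
  rfl

theorem kcount_mono (t : ℕ) : Monotone (kcount t : SimpleGraph V → ℕ) := by
  classical
  intro G H h
  simp only [kcount_eq_card_cliqueFinset]
  exact card_le_card (cliqueFinset_mono H h)

theorem kcount_le_add_of_covBy {G H : SimpleGraph V} (h : G ⋖ H) (t : ℕ) :
    kcount t H ≤ kcount t G + (Fintype.card V - 1).choose (t - 1) := by
  classical
  obtain ⟨u, v, rfl⟩ := SimpleGraph.exists_eq_sup_edge_of_covBy h
  have hnew : ∀ S ∈ (G ⊔ edge u v).cliqueFinset t, S ∉ G.cliqueFinset t → u ∈ S := by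
    intro S hS hSG
    by_contra hu
    rw [mem_cliqueFinset_iff] at hS hSG
    refine hSG ⟨?_, hS.card_eq⟩
    simpa [hu] using hS.isClique.sdiff_of_sup_edge
  have hcount : #((G ⊔ edge u v).cliqueFinset t \ G.cliqueFinset t) ≤
      (Fintype.card V - 1).choose (t - 1) := by
    rw [← card_univ, ← card_erase_of_mem (mem_univ u), ← card_powersetCard]
    refine card_le_card_of_injOn (fun S => S.erase u) (fun S hS => ?_)
      ((erase_injOn' u).mono fun S hS => hnew S (mem_sdiff.1 hS).1 (mem_sdiff.1 hS).2)
    obtain ⟨hS, hSG⟩ := mem_sdiff.1 hS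
    rw [mem_coe, mem_powersetCard, card_erase_of_mem (hnew S hS hSG),
      (mem_cliqueFinset_iff.1 hS).card_eq]
    exact ⟨erase_subset_erase u (subset_univ S), rfl⟩
  simp only [kcount_eq_card_cliqueFinset]
  calc #((G ⊔ edge u v).cliqueFinset t)
      ≤ #(G.cliqueFinset t) + #((G ⊔ edge u v).cliqueFinset t \ G.cliqueFinset t) :=
        card_le_card_sdiff_add_card.trans_eq (add_comm _ _)
    _ ≤ _ := by gcongr

end CliqueCount

section CliqueDensity

variable {V : Type*} [Fintype V]

noncomputable def cliqueDensity (t : ℕ) (G : SimpleGraph V) : ℝ :=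
  kcount t G / (Fintype.card V).choose t

theorem cliqueDensity_mono (t : ℕ) : Monotone (cliqueDensity t : SimpleGraph V → ℝ) :=
  fun _ _ h => div_le_div_of_nonneg_right (by exact_mod_cast kcount_mono t h) (Nat.cast_nonneg _)

theorem cliqueDensity_compl_antitone (t : ℕ) :
    Antitone (fun G : SimpleGraph V => cliqueDensity t Gᶜ) :=
  (cliqueDensity_mono t).comp_antitone fun _ _ => compl_le_compl

theorem cliqueDensity_le_add_of_covBy {t : ℕ} (ht : t ≠ 0) {G H : SimpleGraph V} (h : G ⋖ H) :
    cliqueDensity t H ≤ cliqueDensity t G + t / Fintype.card V := by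
  have hcount : (kcount t H : ℝ) ≤ kcount t G + ((Fintype.card V - 1).choose (t - 1) : ℕ) := by
    exact_mod_cast kcount_le_add_of_covBy h t
  calc cliqueDensity t H
      ≤ (kcount t G + ((Fintype.card V - 1).choose (t - 1) : ℕ)) / (Fintype.card V).choose t :=
        div_le_div_of_nonneg_right hcount (Nat.cast_nonneg _)
    _ = cliqueDensity t G + ((Fintype.card V - 1).choose (t - 1) : ℕ) / (Fintype.card V).choose t :=
        add_div _ _ _
    _ ≤ _ := (add_le_add_iff_left _).2 (Nat.cast_choose_pred_div_cast_choose_le _ ht)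

theorem dist_cliqueDensity_le_of_covBy {t : ℕ} (ht : t ≠ 0) {G H : SimpleGraph V} (h : G ⋖ H) :
    dist (cliqueDensity t G) (cliqueDensity t H) ≤ t / Fintype.card V := by
  rw [dist_comm, Real.dist_eq, abs_of_nonneg (sub_nonneg.2 (cliqueDensity_mono t h.le))]
  linarith [cliqueDensity_le_add_of_covBy ht h]

end CliqueDensity

theorem mem_OmegaST_iff {s t : ℕ} {p : ℝ × ℝ} :
    p ∈ OmegaST s t ↔ ∃ G : (n : ℕ) → SimpleGraph (Fin n),
      Tendsto (fun n => cliqueDensity s (G n)ᶜ) atTop (𝓝 p.1) ∧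
      Tendsto (fun n => cliqueDensity t (G n)) atTop (𝓝 p.2) := by
  simp [OmegaST, cliqueDensity]

/-- `Ω_{s,t}` is vertically convex: together with the compactness of `Ω_{s,t}` this shows
it is the simply connected region between its lower and upper bounding curves. -/
theorem OmegaST_vertically_convex (s t : ℕ) (hs : 2 ≤ s) (ht : 2 ≤ t)
    (x y₁ y₂ y : ℝ) (h₁ : (x, y₁) ∈ OmegaST s t) (h₂ : (x, y₂) ∈ OmegaST s t)
    (hy₁ : y₁ ≤ y) (hy₂ : y ≤ y₂) : (x, y) ∈ OmegaST s t := by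
  rw [mem_OmegaST_iff] at h₁ h₂ ⊢
  obtain ⟨A, hAx, hAy⟩ := h₁
  obtain ⟨B, hBx, hBy⟩ := h₂
  set z : ℕ → ℝ := fun n => max (min (cliqueDensity t (A n)) (cliqueDensity t (B n)))
    (min (max (cliqueDensity t (A n)) (cliqueDensity t (B n))) y)
  have hz n : z n ∈ uIcc (cliqueDensity t (A n)) (cliqueDensity t (B n)) :=
    ⟨le_max_left _ _, max_le min_le_max (min_le_left _ _)⟩
  have hz_lim : Tendsto z atTop (𝓝 y) := by
    simpa [hy₁, hy₂, hy₁.trans hy₂] using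
      (hAy.min hBy).max ((hAy.max hBy).min (tendsto_const_nhds (x := y)))
  choose H hHs hHt using fun n => exists_approx_intermediate_value
    (cliqueDensity_compl_antitone s) (fun _ _ h => cliqueDensity_le_add_of_covBy (by omega) h.compl)
    (fun _ _ => dist_cliqueDensity_le_of_covBy (by omega)) (by positivity) (by positivity)
    (A n) (B n) (hz n)
  simp only [Fintype.card_fin] at hHs hHt
  refine ⟨H,
    tendsto_of_tendsto_of_tendsto_of_le_of_le ?_ ?_ (fun n => (hHs n).1) (fun n => (hHs n).2),
    hz_lim.congr_dist (squeeze_zero (fun _ => dist_nonneg) (fun n => dist_comm (z n) _ ▸ hHt n)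
      (tendsto_const_div_atTop_nhds_zero_nat _))⟩
  · simpa using (hAx.min hBx).sub (tendsto_const_div_atTop_nhds_zero_nat (s : ℝ))
  · simpa using (hAx.max hBx).add (tendsto_const_div_atTop_nhds_zero_nat (s : ℝ))
end
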